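/- arXiv:1702.08900 — 2 statements merged into one kernel-verified Lean document; each statement's English description precedes it below -/
import Mathlib

section
/- As x → 0+, the exponential integral satisfies E1(x) = -log x - γ + o(1); equivalently, E1(x) + log x tends to -γ as x → 0+, where γ is the Euler–Mascheroni constant. -/
/-!
Integrating by parts, `E1 x = ∫_x^∞ e^{-t} log t dt - e^{-x} log x`, so
`E1 x + log x = (1 - e^{-x}) log x + ∫_x^∞ e^{-t} log t dt`. As `x → 0+` the first term is
`O(x log x) → 0`, and the integral tends to `∫_0^∞ e^{-t} log t dt = Γ'(1) = -γ`.
-/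

open MeasureTheory Real Filter

noncomputable def E1 (x : ℝ) : ℝ := ∫ y in Set.Ioi x, Real.exp (-y) / y

open Set Topology Asymptotics

lemma tendsto_setIntegral_Ioi_nhdsGT {E : Type*} [NormedAddCommGroup E] [NormedSpace ℝ E]
    {f : ℝ → E} {a : ℝ} (hf : IntegrableOn f (Ioi a)) :
    Tendsto (fun x => ∫ t in Ioi x, f t) (𝓝[>] a) (𝓝 (∫ t in Ioi a, f t)) := by
  have h_int : IntervalIntegrable f volume a (a + 1) :=
    (intervalIntegrable_iff_integrableOn_Ioc_of_le (by linarith)).2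
      (hf.mono_set Ioc_subset_Ioi_self)
  have h_prim : ContinuousWithinAt (fun x => ∫ t in a..x, f t) (Ioi a) a :=
    (intervalIntegral.continuousWithinAt_primitive (by simp) (by simpa using h_int)
      |>.mono_of_mem_nhdsWithin (Icc_mem_nhdsGT (lt_add_one a)))
  have h_lim := (tendsto_const_nhds (x := ∫ t in Ioi a, f t)).sub h_prim.tendsto
  rw [intervalIntegral.integral_same, sub_zero] at h_lim
  refine h_lim.congr' ?_
  filter_upwards [self_mem_nhdsWithin] with x hx
  rw [← intervalIntegral.integral_Ioi_sub_Ioi hf (le_of_lt hx), sub_sub_cancel]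

lemma abs_log_le_two_mul_rpow_neg_half_add_self {t : ℝ} (ht : 0 < t) :
    |log t| ≤ 2 * t ^ (-(1 / 2) : ℝ) + t := by
  have h_rpow : 0 ≤ t ^ (-(1 / 2) : ℝ) := rpow_nonneg ht.le _
  rcases le_total 0 (log t) with hlog | hlog
  · rw [abs_of_nonneg hlog]
    linarith [log_le_sub_one_of_pos ht]
  · have h := log_le_rpow_div (inv_nonneg.2 ht.le) one_half_pos
    rw [log_inv, inv_rpow ht.le, ← rpow_neg ht.le] at h
    rw [abs_of_nonpos hlog]
    linarith

lemma tendsto_exp_neg_mul_log_atTop : Tendsto (fun t => exp (-t) * log t) atTop (𝓝 0) := by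
  have h := (isBigO_refl (fun t : ℝ => exp (-t)) atTop).mul_isLittleO isLittleO_log_id_atTop
  refine h.trans_tendsto ?_
  simpa [mul_comm] using tendsto_pow_mul_exp_neg_atTop_nhds_zero 1

lemma tendsto_one_sub_exp_neg_mul_log_nhdsGT_zero :
    Tendsto (fun x => (1 - exp (-x)) * log x) (𝓝[>] 0) (𝓝 0) := by
  refine squeeze_zero_norm' ?_ (by simpa using (tendsto_log_mul_rpow_nhdsGT_zero one_pos).norm)
  filter_upwards [self_mem_nhdsWithin] with x (hx : 0 < x)
  have h_lower : 0 ≤ 1 - exp (-x) := by linarith [exp_le_one_iff.2 (neg_nonpos.2 hx.le)]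
  have h_upper : 1 - exp (-x) ≤ x := by linarith [add_one_le_exp (-x)]
  rw [norm_mul, norm_of_nonneg h_lower, norm_eq_abs, abs_of_pos hx, mul_comm]
  gcongr

lemma integrableOn_exp_neg_mul_log_Ioi_zero :
    IntegrableOn (fun t => exp (-t) * log t) (Ioi 0) := by
  have h_half : IntegrableOn (fun t => exp (-t) * t ^ (-(1 / 2) : ℝ)) (Ioi 0) := by
    convert GammaIntegral_convergent (s := 1 / 2) (by norm_num) using 4; norm_num
  have h_two : IntegrableOn (fun t => exp (-t) * t) (Ioi 0) := by
    convert GammaIntegral_convergent (s := 2) (by norm_num) using 3; norm_num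
  refine (h_half.const_mul 2 |>.add h_two).mono' (by fun_prop) ?_
  filter_upwards [ae_restrict_mem measurableSet_Ioi] with t ht
  rw [norm_mul, norm_of_nonneg (exp_pos _).le, norm_eq_abs, Pi.add_apply]
  calc exp (-t) * |log t| ≤ exp (-t) * (2 * t ^ (-(1 / 2) : ℝ) + t) := by
        gcongr; exact abs_log_le_two_mul_rpow_neg_half_add_self ht
    _ = _ := by ring

lemma integral_exp_neg_mul_log_Ioi_zero :
    ∫ t in Ioi 0, exp (-t) * log t = -eulerMascheroniConstant := by
  -- Both sides are `Γ'(1)`: differentiate the Gamma integral under the integral sign.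
  have h_Gamma : Complex.Gamma =ᶠ[𝓝 1] Complex.GammaIntegral := by
    filter_upwards [Complex.continuous_re.isOpen_preimage _ isOpen_Ioi |>.mem_nhds
      (by simp : (1 : ℂ) ∈ Complex.re ⁻¹' Ioi 0)] with s hs
    exact Complex.Gamma_eq_integral hs
  have h := ((Complex.hasDerivAt_GammaIntegral (s := 1) (by simp)).congr_of_eventuallyEq
    h_Gamma).unique Complex.hasDerivAt_Gamma_one
  simp only [sub_self, Complex.cpow_zero, one_mul] at h
  rw [← Complex.ofReal_inj, ← integral_complex_ofReal, Complex.ofReal_neg, ← h]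
  simp only [Complex.ofReal_mul, mul_comm]

lemma integrableOn_exp_neg_div_Ioi {x : ℝ} (hx : 0 < x) :
    IntegrableOn (fun t => exp (-t) / t) (Ioi x) := by
  refine ((exp_neg_integrableOn_Ioi x one_pos).div_const x).mono'
    (by fun_prop : Measurable fun t : ℝ => exp (-t) / t).aestronglyMeasurable ?_
  filter_upwards [ae_restrict_mem measurableSet_Ioi] with t ht
  rw [norm_div, norm_of_nonneg (exp_pos _).le, norm_of_nonneg (hx.trans ht).le, neg_one_mul]
  gcongr
  exact ht.le

lemma E1_eq_integral_exp_neg_mul_log_sub {x : ℝ} (hx : 0 < x) :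
    E1 x = (∫ t in Ioi x, exp (-t) * log t) - exp (-x) * log x := by
  have h_log_int := integrableOn_exp_neg_mul_log_Ioi_zero.mono_set (Ioi_subset_Ioi hx.le)
  have h_deriv : ∀ t ∈ Ioi x, HasDerivAt (fun t => exp (-t) * log t)
      (exp (-t) / t - exp (-t) * log t) t := fun t ht =>
    ((hasDerivAt_neg t).exp.mul (hasDerivAt_log (hx.trans ht).ne')).congr_deriv (by ring)
  have h_ftc := integral_Ioi_of_hasDerivAt_of_tendsto
    (by fun_prop (disch := exact hx.ne') :
      ContinuousWithinAt (fun t => exp (-t) * log t) (Ici x) x)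
    h_deriv ((integrableOn_exp_neg_div_Ioi hx).sub h_log_int) tendsto_exp_neg_mul_log_atTop
  rw [integral_sub (integrableOn_exp_neg_div_Ioi hx) h_log_int] at h_ftc
  rw [E1]
  linarith

theorem E1_add_log_tendsto_neg_gamma :
    Tendsto (fun x : ℝ => E1 x + Real.log x) (nhdsWithin 0 (Set.Ioi 0))
      (nhds (-Real.eulerMascheroniConstant)) := by
  have h_lim := tendsto_one_sub_exp_neg_mul_log_nhdsGT_zero.add
    (tendsto_setIntegral_Ioi_nhdsGT integrableOn_exp_neg_mul_log_Ioi_zero)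
  rw [integral_exp_neg_mul_log_Ioi_zero, zero_add] at h_lim
  refine h_lim.congr' ?_
  filter_upwards [self_mem_nhdsWithin] with x (hx : 0 < x)
  rw [E1_eq_integral_exp_neg_mul_log_sub hx]
  ring
end

section
/- Define L(x) = e^x E1(x) - 1 + x·G(x) for x > 0, where G(x) = ∫_x^∞ e^y E1(y)/y dy. Then (1/x)·L(1/x) → 0 as x → +∞. -/
open MeasureTheory Real Filter
open Set Topology

lemma integrableE1 {x : ℝ} (hx : 0 < x) :
    IntegrableOn (fun y => Real.exp (-y) / y) (Set.Ioi x) := by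
  have hg : IntegrableOn (fun y => Real.exp (-y) / x) (Set.Ioi x) := by
    have := (exp_neg_integrableOn_Ioi x (one_pos)).div_const x
    simpa [IntegrableOn] using this
  refine MeasureTheory.Integrable.mono hg ?_ ?_
  · exact ((Real.measurable_exp.comp measurable_neg).div measurable_id).aestronglyMeasurable
  · filter_upwards [ae_restrict_mem measurableSet_Ioi] with y hy
    have hy' : x < y := hy
    have h0 : (0:ℝ) < y := hx.trans hy'
    rw [Real.norm_eq_abs, Real.norm_eq_abs, abs_div, abs_div,
      abs_of_pos (Real.exp_pos _), abs_of_pos h0, abs_of_pos hx]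
    exact div_le_div_of_nonneg_left (Real.exp_pos _).le hx hy'.le

lemma E1_nonneg {x : ℝ} (hx : 0 < x) : 0 ≤ E1 x := by
  apply setIntegral_nonneg measurableSet_Ioi
  intro y hy
  have := hx.trans hy
  positivity
  
lemma E1_le {x : ℝ} (hx : 0 < x) : E1 x ≤ Real.exp (-x) / x := by
  have h : E1 x ≤ ∫ y in Set.Ioi x, Real.exp (-y) / x := by
    apply setIntegral_mono_on (integrableE1 hx) ?_ measurableSet_Ioi
    · intro y hy
      exact div_le_div_of_nonneg_left (Real.exp_pos _).le hx (le_of_lt hy)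
    · simpa [IntegrableOn] using (exp_neg_integrableOn_Ioi x (one_pos)).div_const x
  calc E1 x ≤ _ := h
    _ = Real.exp (-x) / x := by
        rw [integral_div, integral_exp_neg_Ioi]

lemma integrableE1_Ioc {a b : ℝ} (ha : 0 < a) :
    IntegrableOn (fun y => Real.exp (-y) / y) (Set.Ioc a b) :=
  (integrableE1 ha).mono_set Ioc_subset_Ioi_self

lemma E1_split {a b : ℝ} (ha : 0 < a) (hab : a ≤ b) :
    E1 a = (∫ y in Set.Ioc a b, Real.exp (-y) / y) + E1 b := by
  have hb : 0 < b := ha.trans_le hab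
  rw [E1, ← Set.Ioc_union_Ioi_eq_Ioi hab,
    setIntegral_union (Set.Ioc_disjoint_Ioi le_rfl) measurableSet_Ioi
      (integrableE1_Ioc ha) (integrableE1 hb)]
  rfl

lemma E1_le_log {x : ℝ} (hx : 0 < x) (hx1 : x ≤ 1) : E1 x ≤ 1 - Real.log x := by
  have h1 : E1 1 ≤ 1 := by
    have := E1_le one_pos
    simp only [div_one] at this
    exact this.trans (by simpa using Real.exp_le_one_iff.mpr (by norm_num))
  have hint : IntervalIntegrable (fun y => 1 / y) volume x 1 := by
    apply intervalIntegral.intervalIntegrable_one_div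
    · intro t ht
      rcases Set.mem_uIcc.mp ht with h | h
      · exact ne_of_gt (lt_of_lt_of_le hx h.1)
      · exact ne_of_gt (lt_of_lt_of_le one_pos h.1)
    · exact continuousOn_id
  have h2 : (∫ y in Set.Ioc x 1, Real.exp (-y) / y) ≤ ∫ y in Set.Ioc x 1, 1 / y := by
    apply setIntegral_mono_on (integrableE1_Ioc hx)
      ((intervalIntegrable_iff_integrableOn_Ioc_of_le hx1).mp hint) measurableSet_Ioc
    intro y hy
    have hy0 : 0 < y := hx.trans hy.1
    gcongr
    exact Real.exp_le_one_iff.mpr (by linarith [hy.1, hx])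
  have h3 : (∫ y in Set.Ioc x 1, (1:ℝ) / y) = - Real.log x := by
    rw [← intervalIntegral.integral_of_le hx1, integral_one_div]
    · simp [Real.log_div, ne_of_gt hx]
    · intro h
      rcases Set.mem_uIcc.mp h with h | h
      · exact absurd h.1 (not_le.mpr hx)
      · exact absurd h.1 (not_le.mpr one_pos)
  rw [E1_split hx hx1]
  linarith [h2, h3.le, h1]

lemma contOn_f : ContinuousOn (fun t : ℝ => Real.exp (-t) / t) {t : ℝ | t ≠ 0} := by
  exact ((Real.continuous_exp.comp continuous_neg).continuousOn).div
    continuousOn_id (fun t ht => ht)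

lemma E1_eq_sub {y : ℝ} (hy : 0 < y) :
    E1 y = E1 1 - ∫ t in (1:ℝ)..y, Real.exp (-t) / t := by
  rcases le_total y 1 with h | h
  · rw [intervalIntegral.integral_symm,
      intervalIntegral.integral_of_le h, E1_split hy h]
    ring
  · rw [intervalIntegral.integral_of_le h, E1_split one_pos h]
    ring

lemma E1_continuousOn : ContinuousOn E1 (Set.Ioi 0) := by
  intro y hy
  have hy0 : (0:ℝ) < y := hy
  apply ContinuousAt.continuousWithinAt
  have hf : IntervalIntegrable (fun t => Real.exp (-t) / t) volume 1 y := by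
    apply (contOn_f.mono ?_).intervalIntegrable
    intro t ht
    rcases Set.mem_uIcc.mp ht with h | h
    · exact ne_of_gt (lt_of_lt_of_le one_pos h.1)
    · exact ne_of_gt (lt_of_lt_of_le hy0 h.1)
  have hd : HasDerivAt (fun u => ∫ t in (1:ℝ)..u, Real.exp (-t) / t)
      (Real.exp (-y) / y) y := by
    apply intervalIntegral.integral_hasDerivAt_right hf
    · exact (((Real.measurable_exp.comp measurable_neg).div
        measurable_id).stronglyMeasurable).stronglyMeasurableAtFilter
    · exact ((Real.continuous_exp.comp continuous_neg).continuousAt).div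
        continuousAt_id (ne_of_gt hy0)
  have hc : ContinuousAt (fun u => E1 1 - ∫ t in (1:ℝ)..u, Real.exp (-t) / t) y :=
    continuousAt_const.sub hd.continuousAt
  apply hc.congr
  filter_upwards [IsOpen.mem_nhds isOpen_Ioi hy] with u hu
  exact (E1_eq_sub hu).symm

noncomputable def G (x : ℝ) : ℝ := ∫ y in Set.Ioi x, Real.exp y * E1 y / y

lemma rpow_neg_two_eq {y : ℝ} (hy : 0 < y) : y ^ (-2:ℝ) = 1 / y ^ 2 := by
  rw [Real.rpow_neg hy.le, Real.rpow_two, one_div]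

lemma h_le {y : ℝ} (hy : 0 < y) : Real.exp y * E1 y / y ≤ y ^ (-2:ℝ) := by
  rw [rpow_neg_two_eq hy]
  have h1 : Real.exp y * E1 y ≤ 1 / y := by
    calc Real.exp y * E1 y ≤ Real.exp y * (Real.exp (-y) / y) := by
          gcongr
          exact E1_le hy
      _ = 1 / y := by
          rw [mul_div_assoc', ← Real.exp_add]
          simp
  calc Real.exp y * E1 y / y ≤ (1 / y) / y := by gcongr
    _ = 1 / y ^ 2 := by rw [sq]; ring

lemma h_nonneg {y : ℝ} (hy : 0 < y) : 0 ≤ Real.exp y * E1 y / y := by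
  have := E1_nonneg hy
  positivity

lemma contOn_h : ContinuousOn (fun y => Real.exp y * E1 y / y) (Set.Ioi 0) :=
  (Real.continuous_exp.continuousOn.mul E1_continuousOn).div
    continuousOn_id (fun y hy => ne_of_gt hy)

lemma integrableG {x : ℝ} (hx : 0 < x) :
    IntegrableOn (fun y => Real.exp y * E1 y / y) (Set.Ioi x) := by
  refine MeasureTheory.Integrable.mono
    (integrableOn_Ioi_rpow_of_lt (show (-2:ℝ) < -1 by norm_num) hx) ?_ ?_
  · exact ((contOn_h.mono (Set.Ioi_subset_Ioi hx.le)).aestronglyMeasurable measurableSet_Ioi)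
  · filter_upwards [ae_restrict_mem measurableSet_Ioi] with y hy
    have hy0 : (0:ℝ) < y := hx.trans hy
    rw [Real.norm_eq_abs, Real.norm_eq_abs, abs_of_nonneg (h_nonneg hy0),
      abs_of_nonneg (Real.rpow_nonneg hy0.le _)]
    exact h_le hy0

lemma integrableG_Ioc {a b : ℝ} (ha : 0 < a) :
    IntegrableOn (fun y => Real.exp y * E1 y / y) (Set.Ioc a b) :=
  (integrableG ha).mono_set Ioc_subset_Ioi_self

lemma G_split {a b : ℝ} (ha : 0 < a) (hab : a ≤ b) :
    G a = (∫ y in Set.Ioc a b, Real.exp y * E1 y / y) + G b := by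
  have hb : 0 < b := ha.trans_le hab
  rw [G, ← Set.Ioc_union_Ioi_eq_Ioi hab,
    setIntegral_union (Set.Ioc_disjoint_Ioi le_rfl) measurableSet_Ioi
      (integrableG_Ioc ha) (integrableG hb)]
  rfl

lemma G_nonneg {x : ℝ} (hx : 0 < x) : 0 ≤ G x := by
  apply setIntegral_nonneg measurableSet_Ioi
  intro y hy
  exact h_nonneg (hx.trans hy)

lemma G_one_le : G 1 ≤ 1 := by
  have h : G 1 ≤ ∫ y in Set.Ioi (1:ℝ), y ^ (-2:ℝ) := by
    apply setIntegral_mono_on (integrableG one_pos)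
      (integrableOn_Ioi_rpow_of_lt (by norm_num) one_pos) measurableSet_Ioi
    intro y hy
    exact h_le (one_pos.trans hy)
  rw [integral_Ioi_rpow_of_lt (by norm_num) one_pos] at h
  norm_num at h
  exact h

lemma contOn_g : ContinuousOn (fun y : ℝ => Real.exp 1 * (1 - Real.log y) / y) (Set.Ioi 0) := by
  apply ContinuousOn.div
  · exact continuousOn_const.mul (continuousOn_const.sub
      (Real.continuousOn_log.mono (fun y hy => ne_of_gt hy)))
  · exact continuousOn_id
  · exact fun y hy => ne_of_gt hy

lemma integral_g {t : ℝ} (ht : 0 < t) (ht1 : t ≤ 1) :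
    ∫ y in t..1, Real.exp 1 * (1 - Real.log y) / y
      = Real.exp 1 * (- Real.log t + (Real.log t) ^ 2 / 2) := by
  have hF : ∀ y ∈ Set.uIcc t 1, HasDerivAt
      (fun y => Real.exp 1 * (Real.log y - (Real.log y) ^ 2 / 2))
      (Real.exp 1 * (1 - Real.log y) / y) y := by
    intro y hy
    have hy0 : 0 < y := by
      rcases Set.mem_uIcc.mp hy with h | h
      · exact lt_of_lt_of_le ht h.1
      · exact lt_of_lt_of_le one_pos h.1
    have h1 : HasDerivAt (fun y => Real.log y - (Real.log y) ^ 2 / 2)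
        (y⁻¹ - (2 * Real.log y ^ 1 * y⁻¹) / 2) y :=
      (Real.hasDerivAt_log (ne_of_gt hy0)).sub
        (((Real.hasDerivAt_log (ne_of_gt hy0)).pow 2).div_const 2)
    have := h1.const_mul (Real.exp 1)
    refine this.congr_deriv ?_
    ring
  have hcont : ContinuousOn (fun y : ℝ => Real.exp 1 * (1 - Real.log y) / y)
      (Set.uIcc t 1) := by
    apply contOn_g.mono
    intro y hy
    rcases Set.mem_uIcc.mp hy with h | h
    · exact lt_of_lt_of_le ht h.1
    · exact lt_of_lt_of_le one_pos h.1
  rw [intervalIntegral.integral_eq_sub_of_hasDerivAt hF hcont.intervalIntegrable]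
  simp [Real.log_one]
  ring

lemma G_le_log {t : ℝ} (ht : 0 < t) (ht1 : t ≤ 1) :
    G t ≤ Real.exp 1 * (- Real.log t + (Real.log t) ^ 2 / 2) + 1 := by
  rw [G_split ht ht1]
  have h2 : (∫ y in Set.Ioc t 1, Real.exp y * E1 y / y)
      ≤ ∫ y in Set.Ioc t 1, Real.exp 1 * (1 - Real.log y) / y := by
    apply setIntegral_mono_on (integrableG_Ioc ht) ?_ measurableSet_Ioc
    · intro y hy
      have hy0 : 0 < y := ht.trans hy.1
      have hlog : Real.log y ≤ 0 := Real.log_nonpos hy0.le hy.2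
      have hE : E1 y ≤ 1 - Real.log y := E1_le_log hy0 hy.2
      have hexp : Real.exp y ≤ Real.exp 1 := Real.exp_le_exp.mpr hy.2
      have hE1n := E1_nonneg hy0
      have h1ml : 0 ≤ 1 - Real.log y := by linarith
      gcongr
    · exact ((contOn_g.mono (fun y (hy : y ∈ Set.Icc t 1) =>
          lt_of_lt_of_le ht hy.1)).integrableOn_compact isCompact_Icc).mono_set
          Set.Ioc_subset_Icc_self
  have h3 : (∫ y in Set.Ioc t 1, Real.exp 1 * (1 - Real.log y) / y)
      = Real.exp 1 * (- Real.log t + (Real.log t) ^ 2 / 2) :=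
    ((intervalIntegral.integral_of_le ht1).symm).trans (integral_g ht ht1)
  linarith [G_one_le, h2, h3]

noncomputable def L (x : ℝ) : ℝ := Real.exp x * E1 x - 1 + x * G x

theorem tendsto_inv_mul_L_inv_atTop :
    Tendsto (fun x : ℝ => (1 / x) * L (1 / x)) atTop (nhds 0) := by
  have hlog1 : Tendsto (fun x : ℝ => Real.log x / x) atTop (𝓝 0) := by
    simpa using Real.tendsto_pow_log_div_mul_add_atTop 1 0 1 one_ne_zero
  have hlog2 : Tendsto (fun x : ℝ => (Real.log x) ^ 2 / x) atTop (𝓝 0) := by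
    simpa using Real.tendsto_pow_log_div_mul_add_atTop 1 0 2 one_ne_zero
  have hinv : Tendsto (fun x : ℝ => 1 / x) atTop (𝓝 0) := by
    simpa using tendsto_inv_atTop_zero (𝕜 := ℝ)
  set B : ℝ → ℝ := fun x => Real.exp 1 * (1/x) * (1 + Real.log x) + 1/x
      + (1/x)^2 * (Real.exp 1 * (Real.log x + (Real.log x)^2/2) + 1) with hBdef
  refine squeeze_zero_norm' (a := B) ?_ ?_
  · filter_upwards [eventually_ge_atTop (1:ℝ)] with x hx
    have hx0 : (0:ℝ) < x := lt_of_lt_of_le one_pos hx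
    have hu0 : (0:ℝ) < 1/x := by positivity
    have hu1 : 1/x ≤ 1 := by rw [div_le_one hx0]; exact hx
    have hA0 : 0 ≤ Real.exp (1/x) * E1 (1/x) :=
      mul_nonneg (Real.exp_pos _).le (E1_nonneg hu0)
    have hG0 : 0 ≤ G (1/x) := G_nonneg hu0
    have hlogt : Real.log (1/x) = - Real.log x := by rw [one_div, Real.log_inv]
    have hlt : 0 ≤ Real.log x := Real.log_nonneg hx
    have hA : Real.exp (1/x) * E1 (1/x) ≤ Real.exp 1 * (1 + Real.log x) := by
      have := mul_le_mul (Real.exp_le_exp.mpr hu1) (E1_le_log hu0 hu1)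
        (E1_nonneg hu0) (Real.exp_pos 1).le
      rw [hlogt] at this
      linarith
    have hG : G (1/x) ≤ Real.exp 1 * (Real.log x + (Real.log x)^2/2) + 1 := by
      have := G_le_log hu0 hu1
      rw [hlogt] at this
      calc G (1/x) ≤ _ := this
        _ = Real.exp 1 * (Real.log x + (Real.log x)^2/2) + 1 := by ring_nf
    rw [Real.norm_eq_abs, L]
    simp only [hBdef]
    rw [abs_le]
    set u := 1/x
    set a := Real.exp u * E1 u
    set g := G u
    set lg := Real.log x
    constructor
    · nlinarith [mul_nonneg hu0.le hA0, mul_nonneg (mul_nonneg hu0.le hu0.le) hG0,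
        mul_pos (Real.exp_pos 1) hu0, mul_nonneg (mul_nonneg (Real.exp_pos 1).le hu0.le) hlt,
        mul_nonneg (mul_nonneg hu0.le hu0.le) (mul_nonneg (Real.exp_pos 1).le
          (by nlinarith : (0:ℝ) ≤ lg + lg^2/2))]
    · nlinarith [mul_le_mul_of_nonneg_left hA hu0.le,
        mul_le_mul_of_nonneg_left hG (mul_nonneg hu0.le hu0.le),
        mul_nonneg hu0.le hA0]
  · have h0 : Tendsto B atTop (𝓝 (Real.exp 1 * 0 + Real.exp 1 * 0 + 0
        + (0 * (Real.exp 1 * 0) + 0 * ((Real.exp 1/2) * 0) + 0 * 0))) := by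
      have hB2 : B = fun x => Real.exp 1 * (1/x) + Real.exp 1 * (Real.log x / x) + 1/x
          + ((1/x) * (Real.exp 1 * (Real.log x / x))
            + (1/x) * ((Real.exp 1/2) * ((Real.log x)^2 / x)) + (1/x) * (1/x)) := by
        funext x
        simp only [hBdef]
        ring
      rw [hB2]
      exact (((hinv.const_mul _).add (hlog1.const_mul _)).add hinv).add
        (((hinv.mul (hlog1.const_mul _)).add
          (hinv.mul (hlog2.const_mul _))).add (hinv.mul hinv))
    simpa using h0
end
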